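/- Let n(t) := (cos t, sin t, 0) and fix κ² > 0. Consider C¹ maps m : [−1,1] × ℝ → ℝ³ with |m(z,t)| = 1 for all (z,t), m(z, t+2π) = m(z,t), and satisfying the weak axial symmetry condition ∫_{−π}^{π} m₁(z,t) dt = 0 and ∫_{−π}^{π} m₂(z,t) dt = 0 for every z ∈ [−1,1]. Define E(m) := ∫_{−1}^{1} ∫_{−π}^{π} ( |∂_z m|² + |∂_t m|² + κ² |m(z,t) × n(t)|² ) dt dz. If m minimizes E in this class, then ∂_z m ≡ 0, and moreover: (i) if 0 < κ² < 1 then m ≡ (0,0,1) or m ≡ (0,0,−1); (ii) if κ² > 1 then m(z,t) = n(t) for all (z,t) or m(z,t) = −n(t) for all (z,t); (iii) if κ² = 1 then there exists θ ∈ ℝ such that m(z,t) = (sin θ cos t, sin θ sin t, cos θ) for all (z,t). The minimal value of E in this class equals 4πκ² if 0 < κ² ≤ 1 and 4π if κ² ≥ 1. -/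

import Mathlib

open Real Set MeasureTheory

/-- Squared Euclidean norm of a vector in `ℝ³`. -/
noncomputable def sq3 (v : Fin 3 → ℝ) : ℝ := v 0 ^ 2 + v 1 ^ 2 + v 2 ^ 2

/-- The outward unit normal `n(t) = (cos t, sin t, 0)` to the circular cylinder. -/
noncomputable def nvec (t : ℝ) : Fin 3 → ℝ := ![Real.cos t, Real.sin t, 0]

/-- The admissible class of weakly axially symmetric configurations:
`C¹` maps `m : [−1,1] × ℝ → ℝ³` (represented by `C¹` maps on `ℝ²`), of pointwise
unit norm, `2π`-periodic in `t`, whose in-plane component has zero angular average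
for every `z ∈ [−1,1]`. -/
def AdmissibleWAS (m : ℝ → ℝ → Fin 3 → ℝ) : Prop :=
  ContDiff ℝ 1 (fun p : ℝ × ℝ => m p.1 p.2) ∧
  (∀ z t : ℝ, sq3 (m z t) = 1) ∧
  (∀ z t : ℝ, m z (t + 2 * π) = m z t) ∧
  (∀ z ∈ Icc (-1 : ℝ) 1,
    (∫ t in (-π)..π, m z t 0) = 0 ∧ (∫ t in (-π)..π, m z t 1) = 0)

/-- The micromagnetic energy on the circular cylinder `[−1,1] × S¹`. -/
noncomputable def cylEnergy (κ : ℝ) (m : ℝ → ℝ → Fin 3 → ℝ) : ℝ :=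
  ∫ z in (-1 : ℝ)..1, ∫ t in (-π)..π,
    (sq3 (deriv (fun w => m w t) z) + sq3 (deriv (fun s => m z s) t)
      + κ ^ 2 * sq3 (crossProduct (m z t) (nvec t)))


/-!
Write `m_⊥ = (m₁, m₂)`. On each slice `{z} × S¹` the in-plane part has zero mean, so Wirtinger's
inequality gives `∫ |∂ₜ m_⊥|² ≥ ∫ |m_⊥|²`, while `|m| = 1` gives
`|m_⊥|² + κ² m₃² ≥ min 1 κ²`. Hence every slice carries energy at least `2π min 1 κ²`, which
`e₃` (for `κ² ≤ 1`) or `n` (for `κ² ≥ 1`) attain on every slice, so the minimal energy is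
`4π min 1 κ²`. For a minimiser every slice is then optimal, so each discarded term vanishes:
`∂_z m = 0`, `∂ₜ m₃ = 0`, `m_⊥ ∥ n`, and `m_⊥ = 0` if `κ² < 1`, `m₃ = 0` if `κ² > 1`.
A continuous unit field with these properties is `(α cos t, α sin t, β)` with `α² + β² = 1`.
-/

theorem ContinuousOn.memLp_two_restrict_Ioc {E : Type*} [NormedAddCommGroup E] {a b : ℝ}
    {u : ℝ → E} (hu : ContinuousOn u (Icc a b)) :
    MemLp u 2 (volume.restrict (Ioc a b)) := by
  refine (memLp_two_iff_integrable_sq_norm ?_).2 ?_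
  · exact (hu.aestronglyMeasurable measurableSet_Icc).mono_set Ioc_subset_Icc_self
  · exact ((hu.norm.pow 2).integrableOn_Icc).mono_set Ioc_subset_Icc_self

theorem fourierCoeffOn_zero_of_intervalIntegral_eq_zero {a b : ℝ} (hab : a < b) {u : ℝ → ℂ}
    (hmean : ∫ x in a..b, u x = 0) : fourierCoeffOn hab u 0 = 0 := by
  simp [fourierCoeffOn_eq_integral, hmean]

theorem fourierCoeffOn_of_hasDerivAt_of_eq {a b : ℝ} (hab : a < b) {u u' : ℝ → ℂ}
    (hu : ∀ x ∈ uIcc a b, HasDerivAt u (u' x) x) (hu' : IntervalIntegrable u' volume a b)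
    (hper : u a = u b) {n : ℤ} (hn : n ≠ 0) :
    fourierCoeffOn hab u' n = 2 * π * Complex.I * n / (b - a) * fourierCoeffOn hab u n := by
  rw [fourierCoeffOn_of_hasDerivAt hab hn hu hu', hper, sub_self, mul_zero, zero_sub]
  have hba : ((b : ℂ) - a) ≠ 0 := by exact_mod_cast (sub_pos.2 hab).ne'
  have : (n : ℂ) ≠ 0 := by exact_mod_cast hn
  field_simp

theorem wirtinger_inequality {a b : ℝ} (hab : a < b) {u u' : ℝ → ℂ}
    (hu : ∀ x ∈ Icc a b, HasDerivAt u (u' x) x) (hu' : ContinuousOn u' (Icc a b))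
    (hper : u a = u b) (hmean : ∫ x in a..b, u x = 0) :
    (2 * π / (b - a)) ^ 2 * ∫ x in a..b, ‖u x‖ ^ 2 ≤ ∫ x in a..b, ‖u' x‖ ^ 2 := by
  have hba : 0 < b - a := sub_pos.2 hab
  have hcoeff : ∀ n, (2 * π / (b - a)) ^ 2 * ‖fourierCoeffOn hab u n‖ ^ 2
      ≤ ‖fourierCoeffOn hab u' n‖ ^ 2 := by
    intro n
    rcases eq_or_ne n 0 with rfl | hn
    · simp [fourierCoeffOn_zero_of_intervalIntegral_eq_zero hab hmean]
    rw [fourierCoeffOn_of_hasDerivAt_of_eq hab (by rwa [uIcc_of_le hab.le])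
      (hu'.intervalIntegrable_of_Icc hab.le) hper hn]
    have hnorm : ‖2 * π * Complex.I * n / (b - a)‖ = 2 * π / (b - a) * |(n : ℝ)| := by
      rw [← Complex.ofReal_sub]
      simp only [norm_mul, norm_div, Complex.norm_I, Complex.norm_ofNat, Complex.norm_real,
        Complex.norm_intCast, norm_eq_abs, abs_of_pos pi_pos, abs_of_pos hba]
      ring
    have h1 : (1 : ℝ) ≤ |(n : ℝ)| := by exact_mod_cast Int.one_le_abs hn
    rw [norm_mul, hnorm, mul_pow, mul_pow]
    gcongr
    exact le_mul_of_one_le_right (by positivity) (one_le_pow₀ h1)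
  have hu_cont : ContinuousOn u (Icc a b) := fun x hx => (hu x hx).continuousAt.continuousWithinAt
  have h := hasSum_le hcoeff
    ((hasSum_sq_fourierCoeffOn hab hu_cont.memLp_two_restrict_Ioc).mul_left _)
    (hasSum_sq_fourierCoeffOn hab hu'.memLp_two_restrict_Ioc)
  rw [smul_eq_mul, smul_eq_mul, mul_left_comm] at h
  exact le_of_mul_le_mul_left h (inv_pos.2 hba)

theorem wirtinger_inequality_two_pi {x y x' y' : ℝ → ℝ}
    (hx : ∀ t, HasDerivAt x (x' t) t) (hy : ∀ t, HasDerivAt y (y' t) t)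
    (hx' : Continuous x') (hy' : Continuous y')
    (hxper : x (-π) = x π) (hyper : y (-π) = y π)
    (hxmean : ∫ t in (-π)..π, x t = 0) (hymean : ∫ t in (-π)..π, y t = 0) :
    ∫ t in (-π)..π, (x t ^ 2 + y t ^ 2) ≤ ∫ t in (-π)..π, (x' t ^ 2 + y' t ^ 2) := by
  have hsq : ∀ a b : ℝ, ‖(a : ℂ) + b * Complex.I‖ ^ 2 = a ^ 2 + b ^ 2 := fun a b => by
    rw [Complex.norm_add_mul_I, sq_sqrt (by positivity)]
  have hu : ∀ t ∈ Icc (-π) π, HasDerivAt (fun s => (x s : ℂ) + y s * Complex.I)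
      (x' t + y' t * Complex.I) t :=
    fun t _ => (hx t).ofReal_comp.add ((hy t).ofReal_comp.mul_const _)
  have hxc : Continuous x := continuous_iff_continuousAt.2 fun t => (hx t).continuousAt
  have hyc : Continuous y := continuous_iff_continuousAt.2 fun t => (hy t).continuousAt
  have hmean : ∫ t in (-π)..π, ((x t : ℂ) + y t * Complex.I) = 0 := by
    rw [intervalIntegral.integral_add, intervalIntegral.integral_mul_const,
      intervalIntegral.integral_ofReal, intervalIntegral.integral_ofReal, hxmean, hymean]
    · simp
    all_goals exact Continuous.intervalIntegrable (by fun_prop) _ _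
  have h := wirtinger_inequality (by linarith [pi_pos]) hu (by fun_prop)
    (by rw [hxper, hyper]) hmean
  rw [sub_neg_eq_add, ← two_mul, div_self two_pi_pos.ne', one_pow, one_mul] at h
  simpa only [hsq] using h

theorem eq_zero_of_intervalIntegral_nonpos {f : ℝ → ℝ} {a b : ℝ} (hab : a < b)
    (hf : ContinuousOn f (Icc a b)) (hnonneg : ∀ x ∈ Icc a b, 0 ≤ f x)
    (hint : ∫ x in a..b, f x ≤ 0) : ∀ x ∈ Icc a b, f x = 0 := fun x hx =>
  (hnonneg x hx).antisymm' <| not_lt.1 fun hpos =>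
    (intervalIntegral.integral_pos hab hf (fun y hy => hnonneg y (Ioc_subset_Icc_self hy))
      ⟨x, hx, hpos⟩).not_ge hint

theorem Function.Periodic.deriv {E : Type*} [NormedAddCommGroup E] [NormedSpace ℝ E]
    {f : ℝ → E} {c : ℝ} (hf : Function.Periodic f c) : Function.Periodic (deriv f) c := by
  intro x
  rw [← deriv_comp_add_const, funext hf]

theorem exists_sin_eq_and_cos_eq {a b : ℝ} (h : a ^ 2 + b ^ 2 = 1) :
    ∃ θ : ℝ, sin θ = a ∧ cos θ = b := by
  have hnorm : ‖(b : ℂ) + a * Complex.I‖ = 1 := by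
    rw [Complex.norm_add_mul_I, add_comm, h, sqrt_one]
  have hne : (b : ℂ) + a * Complex.I ≠ 0 := fun h0 => by simp [h0] at hnorm
  refine ⟨Complex.arg (b + a * Complex.I), ?_, ?_⟩
  · simp [Complex.sin_arg, hnorm]
  · simp [Complex.cos_arg hne, hnorm]

theorem exists_eq_mul_cos_sin_of_parallel {x y : ℝ → ℝ} (hx : Continuous x) (hy : Continuous y)
    {r : ℝ} (hnorm : ∀ t, x t ^ 2 + y t ^ 2 = r) (hpar : ∀ t, x t * sin t - y t * cos t = 0) :
    ∃ α : ℝ, ∀ t, x t = α * cos t ∧ y t = α * sin t := by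
  -- the signed length `ρ` is continuous with constant square, hence constant
  set ρ : ℝ → ℝ := fun t => x t * cos t + y t * sin t
  have hρ_sq : ∀ t, ρ t ^ 2 = ρ 0 ^ 2 := by
    have hsq : ∀ t, ρ t ^ 2 = r := fun t => by
      linear_combination hnorm t + (x t ^ 2 + y t ^ 2) * sin_sq_add_cos_sq t
        - (x t * sin t - y t * cos t) * hpar t
    exact fun t => (hsq t).trans (hsq 0).symm
  have hρ_const : ∀ t, ρ t = ρ 0 := by
    by_cases h0 : ρ 0 = 0
    · intro t
      rw [h0] at hρ_sq ⊢
      simpa using hρ_sq t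
    · exact fun t => isPreconnected_univ.eq_of_sq_eq (by fun_prop) continuousOn_const
        (fun t _ => hρ_sq t) (fun _ => h0) (mem_univ 0) rfl (mem_univ t)
  refine ⟨ρ 0, fun t => ⟨?_, ?_⟩⟩ <;> rw [← hρ_const t]
  · linear_combination sin t * hpar t - x t * sin_sq_add_cos_sq t
  · linear_combination -cos t * hpar t - y t * sin_sq_add_cos_sq t

section Partials

variable {E : Type*} [NormedAddCommGroup E] [NormedSpace ℝ E] {f : ℝ → ℝ → E}

theorem ContDiff.hasDerivAt_partial_fst (hf : ContDiff ℝ 1 (fun p : ℝ × ℝ => f p.1 p.2)) (z t : ℝ) :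
    HasDerivAt (fun w => f w t) (fderiv ℝ (fun p : ℝ × ℝ => f p.1 p.2) (z, t) (1, 0)) z :=
  (hf.differentiable one_ne_zero (z, t)).hasFDerivAt.comp_hasDerivAt_of_eq z
    ((hasDerivAt_id' z).prodMk (hasDerivAt_const z t)) rfl

theorem ContDiff.hasDerivAt_partial_snd (hf : ContDiff ℝ 1 (fun p : ℝ × ℝ => f p.1 p.2)) (z t : ℝ) :
    HasDerivAt (fun s => f z s) (fderiv ℝ (fun p : ℝ × ℝ => f p.1 p.2) (z, t) (0, 1)) t :=
  (hf.differentiable one_ne_zero (z, t)).hasFDerivAt.comp_hasDerivAt_of_eq t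
    ((hasDerivAt_const t z).prodMk (hasDerivAt_id' t)) rfl

theorem ContDiff.continuous_deriv_partial_fst (hf : ContDiff ℝ 1 (fun p : ℝ × ℝ => f p.1 p.2)) :
    Continuous fun p : ℝ × ℝ => deriv (fun w => f w p.2) p.1 := by
  simp_rw [fun p : ℝ × ℝ => (hf.hasDerivAt_partial_fst p.1 p.2).deriv]
  exact (hf.continuous_fderiv one_ne_zero).clm_apply continuous_const

theorem ContDiff.continuous_deriv_partial_snd (hf : ContDiff ℝ 1 (fun p : ℝ × ℝ => f p.1 p.2)) :
    Continuous fun p : ℝ × ℝ => deriv (fun s => f p.1 s) p.2 := by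
  simp_rw [fun p : ℝ × ℝ => (hf.hasDerivAt_partial_snd p.1 p.2).deriv]
  exact (hf.continuous_fderiv one_ne_zero).clm_apply continuous_const

end Partials

theorem sq3_nonneg (v : Fin 3 → ℝ) : 0 ≤ sq3 v := by
  unfold sq3
  positivity

theorem sq3_eq_zero {v : Fin 3 → ℝ} (h : sq3 v = 0) : v = 0 := by
  unfold sq3 at h
  funext i
  fin_cases i <;> simp <;> nlinarith [sq_nonneg (v 0), sq_nonneg (v 1), sq_nonneg (v 2)]

theorem continuous_sq3 : Continuous sq3 := by
  unfold sq3
  fun_prop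

theorem sq3_crossProduct_nvec (v : Fin 3 → ℝ) (t : ℝ) :
    sq3 (crossProduct v (nvec t)) = v 2 ^ 2 + (v 0 * sin t - v 1 * cos t) ^ 2 := by
  simp only [sq3, nvec, cross_apply, Matrix.cons_val_zero, Matrix.cons_val_one,
    Matrix.cons_val_two, Matrix.head_cons, Matrix.tail_cons]
  linear_combination v 2 ^ 2 * sin_sq_add_cos_sq t

noncomputable def cylDensity (κ : ℝ) (m : ℝ → ℝ → Fin 3 → ℝ) (z t : ℝ) : ℝ :=
  sq3 (deriv (fun w => m w t) z) + sq3 (deriv (fun s => m z s) t)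
    + κ ^ 2 * sq3 (crossProduct (m z t) (nvec t))

noncomputable def sliceEnergy (κ : ℝ) (m : ℝ → ℝ → Fin 3 → ℝ) (z : ℝ) : ℝ :=
  ∫ t in (-π)..π, cylDensity κ m z t

noncomputable def energyFloor (κ : ℝ) : ℝ := min 1 (κ ^ 2)

/-- The energy density minus `energyFloor κ`, once `|∂ₜ m_⊥|²` has been replaced by its
Wirtinger lower bound `|m_⊥|²`; see `cylDensity_eq_slackDensity_add`. -/
noncomputable def slackDensity (κ : ℝ) (m : ℝ → ℝ → Fin 3 → ℝ) (z t : ℝ) : ℝ :=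
  sq3 (deriv (fun w => m w t) z) + deriv (fun s => m z s) t 2 ^ 2
    + κ ^ 2 * (m z t 0 * sin t - m z t 1 * cos t) ^ 2
    + (1 - energyFloor κ) * (m z t 0 ^ 2 + m z t 1 ^ 2)
    + (κ ^ 2 - energyFloor κ) * m z t 2 ^ 2

section

variable {κ : ℝ} {m : ℝ → ℝ → Fin 3 → ℝ}

theorem cylEnergy_eq_integral_sliceEnergy :
    cylEnergy κ m = ∫ z in (-1 : ℝ)..1, sliceEnergy κ m z := rfl

theorem cylDensity_eq_slackDensity_add {z t : ℝ} (hunit : sq3 (m z t) = 1) :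
    cylDensity κ m z t = slackDensity κ m z t
      + (deriv (fun s => m z s) t 0 ^ 2 + deriv (fun s => m z s) t 1 ^ 2)
      - (m z t 0 ^ 2 + m z t 1 ^ 2) + energyFloor κ := by
  rw [cylDensity, slackDensity, sq3_crossProduct_nvec]
  unfold sq3 at hunit ⊢
  linear_combination energyFloor κ * hunit

theorem slackDensity_nonneg (z t : ℝ) : 0 ≤ slackDensity κ m z t := by
  have h1 : energyFloor κ ≤ 1 := min_le_left _ _
  have h2 : energyFloor κ ≤ κ ^ 2 := min_le_right _ _
  unfold slackDensity
  have := sq3_nonneg (deriv (fun w => m w t) z)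
  have := mul_nonneg (sub_nonneg.2 h1) (add_nonneg (sq_nonneg (m z t 0)) (sq_nonneg (m z t 1)))
  have := mul_nonneg (sub_nonneg.2 h2) (sq_nonneg (m z t 2))
  positivity

theorem periodic_slackDensity (hper : ∀ z t, m z (t + 2 * π) = m z t) (z : ℝ) :
    Function.Periodic (slackDensity κ m z) (2 * π) := by
  intro t
  have hz : (fun w => m w (t + 2 * π)) = fun w => m w t := funext fun w => hper w t
  have ht : Function.Periodic (fun s => m z s) (2 * π) := hper z
  simp only [slackDensity, hz, ht.deriv t, hper z t, sin_add_two_pi, cos_add_two_pi]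

theorem continuous_cylDensity (hm : ContDiff ℝ 1 (fun p : ℝ × ℝ => m p.1 p.2)) :
    Continuous (Function.uncurry (cylDensity κ m)) := by
  have hz := hm.continuous_deriv_partial_fst
  have ht := hm.continuous_deriv_partial_snd
  have hc := hm.continuous
  have := continuous_sq3
  simp only [Function.uncurry_def, cylDensity, sq3_crossProduct_nvec]
  fun_prop

theorem continuous_slackDensity (hm : ContDiff ℝ 1 (fun p : ℝ × ℝ => m p.1 p.2)) :
    Continuous (Function.uncurry (slackDensity κ m)) := by
  have hz := hm.continuous_deriv_partial_fst
  have ht := hm.continuous_deriv_partial_snd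
  have hc := hm.continuous
  have := continuous_sq3
  simp only [Function.uncurry_def, slackDensity]
  fun_prop

theorem continuous_sliceEnergy (hm : ContDiff ℝ 1 (fun p : ℝ × ℝ => m p.1 p.2)) :
    Continuous (sliceEnergy κ m) :=
  intervalIntegral.continuous_parametric_intervalIntegral_of_continuous'
    (continuous_cylDensity hm) _ _

theorem integral_slackDensity_le (hm : AdmissibleWAS m) {z : ℝ} (hz : z ∈ Icc (-1 : ℝ) 1) :
    ∫ t in (-π)..π, slackDensity κ m z t ≤ sliceEnergy κ m z - 2 * π * energyFloor κ := by
  obtain ⟨hC, hunit, hper, hmean⟩ := hm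
  have hdt : ∀ t, HasDerivAt (fun s => m z s) (deriv (fun s => m z s) t) t := fun t =>
    (hC.hasDerivAt_partial_snd z t).differentiableAt.hasDerivAt
  have hdt_cont : Continuous fun t => deriv (fun s => m z s) t :=
    hC.continuous_deriv_partial_snd.comp (Continuous.prodMk_right z)
  have hm_cont : Continuous fun t => m z t := hC.continuous.comp (Continuous.prodMk_right z)
  have hslack_cont : Continuous fun t => slackDensity κ m z t :=
    (continuous_slackDensity hC).uncurry_left z
  have hend : m z (-π) = m z π := by rw [← hper z (-π)]; ring_nf
  have hwirt := wirtinger_inequality_two_pi (fun t => hasDerivAt_pi.1 (hdt t) 0)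
    (fun t => hasDerivAt_pi.1 (hdt t) 1) (by fun_prop) (by fun_prop)
    (congrFun hend 0) (congrFun hend 1) (hmean z hz).1 (hmean z hz).2
  have hsplit : sliceEnergy κ m z = (∫ t in (-π)..π, slackDensity κ m z t)
      + ((∫ t in (-π)..π, (deriv (fun s => m z s) t 0 ^ 2 + deriv (fun s => m z s) t 1 ^ 2))
        - ∫ t in (-π)..π, (m z t 0 ^ 2 + m z t 1 ^ 2)) + 2 * π * energyFloor κ := by
    rw [sliceEnergy, intervalIntegral.integral_congr fun t _ => cylDensity_eq_slackDensity_add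
      (hunit z t), intervalIntegral.integral_add, intervalIntegral.integral_sub,
      intervalIntegral.integral_add, intervalIntegral.integral_const, smul_eq_mul]
    · ring
    all_goals exact Continuous.intervalIntegrable (by fun_prop) _ _
  linarith

theorem two_pi_mul_energyFloor_le_sliceEnergy (hm : AdmissibleWAS m) {z : ℝ}
    (hz : z ∈ Icc (-1 : ℝ) 1) :
    2 * π * energyFloor κ ≤ sliceEnergy κ m z := by
  have := intervalIntegral.integral_nonneg (μ := volume) (neg_le_self pi_pos.le)
    fun t _ => slackDensity_nonneg (κ := κ) (m := m) z t
  linarith [integral_slackDensity_le (κ := κ) hm hz]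

theorem four_pi_mul_energyFloor_le_cylEnergy (hm : AdmissibleWAS m) :
    4 * π * energyFloor κ ≤ cylEnergy κ m := by
  have h := intervalIntegral.integral_mono_on (by norm_num : (-1 : ℝ) ≤ 1)
    (intervalIntegrable_const (μ := volume)) ((continuous_sliceEnergy hm.1).intervalIntegrable _ _)
    fun z hz => two_pi_mul_energyFloor_le_sliceEnergy (κ := κ) hm hz
  rw [intervalIntegral.integral_const, smul_eq_mul] at h
  rw [cylEnergy_eq_integral_sliceEnergy]
  linarith

noncomputable def axialMap (α β : ℝ) : ℝ → ℝ → Fin 3 → ℝ := fun _ t => ![α * cos t, α * sin t, β]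

theorem hasDerivAt_axialMap (α β z t : ℝ) :
    HasDerivAt (fun s => axialMap α β z s) ![-(α * sin t), α * cos t, 0] t := by
  rw [hasDerivAt_pi]
  intro i
  fin_cases i
  · simpa [axialMap] using (hasDerivAt_cos t).const_mul α
  · simpa [axialMap] using (hasDerivAt_sin t).const_mul α
  · simpa [axialMap] using hasDerivAt_const t β

theorem admissibleWAS_axialMap {α β : ℝ} (h : α ^ 2 + β ^ 2 = 1) :
    AdmissibleWAS (axialMap α β) := by
  refine ⟨?_, fun z t => ?_, fun z t => ?_, fun z _ => ⟨?_, ?_⟩⟩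
  · rw [contDiff_pi]
    intro i
    fin_cases i <;> simp [axialMap] <;> fun_prop
  · simp only [sq3, axialMap, Matrix.cons_val_zero, Matrix.cons_val_one, Matrix.cons_val_two,
      Matrix.head_cons, Matrix.tail_cons]
    linear_combination h + α ^ 2 * sin_sq_add_cos_sq t
  · simp [axialMap]
  · simp [axialMap, integral_cos]
  · simp [axialMap, integral_sin]

theorem cylDensity_axialMap (κ α β z t : ℝ) :
    cylDensity κ (axialMap α β) z t = α ^ 2 + κ ^ 2 * β ^ 2 := by
  rw [cylDensity, (hasDerivAt_axialMap α β z t).deriv, sq3_crossProduct_nvec]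
  simp only [axialMap, deriv_const, sq3, Pi.zero_apply, Matrix.cons_val_zero, Matrix.cons_val_one,
    Matrix.cons_val_two, Matrix.head_cons, Matrix.tail_cons]
  linear_combination α ^ 2 * sin_sq_add_cos_sq t

theorem cylEnergy_axialMap (κ α β : ℝ) :
    cylEnergy κ (axialMap α β) = 4 * π * (α ^ 2 + κ ^ 2 * β ^ 2) := by
  simp only [cylEnergy_eq_integral_sliceEnergy, sliceEnergy, cylDensity_axialMap,
    intervalIntegral.integral_const, smul_eq_mul]
  ring

theorem exists_admissibleWAS_cylEnergy_eq (κ : ℝ) :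
    ∃ m, AdmissibleWAS m ∧ cylEnergy κ m = 4 * π * energyFloor κ := by
  rcases le_total 1 (κ ^ 2) with h | h
  · exact ⟨axialMap 1 0, admissibleWAS_axialMap (by norm_num),
      by rw [cylEnergy_axialMap, energyFloor, min_eq_left h]; ring⟩
  · exact ⟨axialMap 0 1, admissibleWAS_axialMap (by norm_num),
      by rw [cylEnergy_axialMap, energyFloor, min_eq_right h]; ring⟩

theorem slackDensity_eq_zero_iff {z t : ℝ} :
    slackDensity κ m z t = 0 ↔
      deriv (fun w => m w t) z = 0 ∧ deriv (fun s => m z s) t 2 = 0 ∧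
      m z t 0 * sin t - m z t 1 * cos t = 0 ∧
      (1 - energyFloor κ) * (m z t 0 ^ 2 + m z t 1 ^ 2) = 0 ∧
      (κ ^ 2 - energyFloor κ) * m z t 2 ^ 2 = 0 := by
  refine ⟨fun h => ?_, fun ⟨h1, h2, h3, h4, h5⟩ => by simp [slackDensity, h1, h2, h3, h4, h5, sq3]⟩
  have h1 := sq3_nonneg (deriv (fun w => m w t) z)
  have h2 := sq_nonneg (deriv (fun s => m z s) t 2)
  have h3 := mul_nonneg (sq_nonneg κ) (sq_nonneg (m z t 0 * sin t - m z t 1 * cos t))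
  have h4 := mul_nonneg (sub_nonneg.2 (min_le_left 1 (κ ^ 2)))
    (add_nonneg (sq_nonneg (m z t 0)) (sq_nonneg (m z t 1)))
  have h5 := mul_nonneg (sub_nonneg.2 (min_le_right 1 (κ ^ 2))) (sq_nonneg (m z t 2))
  unfold slackDensity energyFloor at h
  unfold energyFloor
  have hplanar : (1 - min 1 (κ ^ 2)) * (m z t 0 ^ 2 + m z t 1 ^ 2) = 0 := by linarith
  refine ⟨sq3_eq_zero (by linarith), pow_eq_zero_iff two_ne_zero |>.1 (by linarith), ?_, hplanar,
    by linarith⟩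
  -- if `κ = 0` the term `κ² (m₁ sin t - m₂ cos t)²` is void, but then `energyFloor κ = 0`
  -- forces `m_⊥ = 0`
  rcases eq_or_ne (κ ^ 2) 0 with hκ | hκ
  · rw [hκ, min_eq_right zero_le_one, sub_zero, one_mul] at hplanar
    have h0 : m z t 0 = 0 := by nlinarith [sq_nonneg (m z t 0), sq_nonneg (m z t 1)]
    have h1 : m z t 1 = 0 := by nlinarith [sq_nonneg (m z t 0), sq_nonneg (m z t 1)]
    simp [h0, h1]
  · exact pow_eq_zero_iff two_ne_zero |>.1
      ((mul_eq_zero.1 (by linarith : κ ^ 2 * _ = 0)).resolve_left hκ)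

def IsWASMinimizer (κ : ℝ) (m : ℝ → ℝ → Fin 3 → ℝ) : Prop :=
  AdmissibleWAS m ∧ ∀ m' : ℝ → ℝ → Fin 3 → ℝ, AdmissibleWAS m' → cylEnergy κ m ≤ cylEnergy κ m'

namespace IsWASMinimizer

theorem cylEnergy_eq (h : IsWASMinimizer κ m) : cylEnergy κ m = 4 * π * energyFloor κ := by
  obtain ⟨m', hm', hE⟩ := exists_admissibleWAS_cylEnergy_eq κ
  exact le_antisymm (hE ▸ h.2 m' hm') (four_pi_mul_energyFloor_le_cylEnergy h.1)

theorem sliceEnergy_eq (h : IsWASMinimizer κ m) {z : ℝ} (hz : z ∈ Icc (-1 : ℝ) 1) :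
    sliceEnergy κ m z = 2 * π * energyFloor κ := by
  have hcont := continuous_sliceEnergy (κ := κ) h.1.1
  have hint : ∫ w in (-1 : ℝ)..1, (sliceEnergy κ m w - 2 * π * energyFloor κ) ≤ 0 := by
    rw [intervalIntegral.integral_sub (hcont.intervalIntegrable _ _) intervalIntegrable_const,
      ← cylEnergy_eq_integral_sliceEnergy, h.cylEnergy_eq, intervalIntegral.integral_const,
      smul_eq_mul]
    linarith
  have := eq_zero_of_intervalIntegral_nonpos
    (f := fun w => sliceEnergy κ m w - 2 * π * energyFloor κ) (by norm_num)
    (hcont.sub continuous_const).continuousOn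
    (fun w hw => sub_nonneg.2 (two_pi_mul_energyFloor_le_sliceEnergy h.1 hw)) hint z hz
  linarith

theorem slackDensity_eq_zero (h : IsWASMinimizer κ m) {z : ℝ} (hz : z ∈ Icc (-1 : ℝ) 1) (t : ℝ) :
    slackDensity κ m z t = 0 := by
  have hint : ∫ s in (-π)..π, slackDensity κ m z s ≤ 0 := by
    linarith [integral_slackDensity_le (κ := κ) h.1 hz, h.sliceEnergy_eq hz]
  obtain ⟨s, hs, hts⟩ := (periodic_slackDensity h.1.2.2.1 z).exists_mem_Ico two_pi_pos t (-π)
  rw [hts]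
  exact eq_zero_of_intervalIntegral_nonpos (by linarith [pi_pos])
    ((continuous_slackDensity h.1.1).uncurry_left z).continuousOn
    (fun s _ => slackDensity_nonneg z s) hint s ⟨hs.1, by linarith [hs.2]⟩

theorem deriv_fst_eq_zero (h : IsWASMinimizer κ m) {z : ℝ} (hz : z ∈ Icc (-1 : ℝ) 1) (t : ℝ) :
    deriv (fun w => m w t) z = 0 :=
  (slackDensity_eq_zero_iff.1 (h.slackDensity_eq_zero hz t)).1

theorem eq_of_mem_Icc (h : IsWASMinimizer κ m) {z : ℝ} (hz : z ∈ Icc (-1 : ℝ) 1) (t : ℝ) :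
    m z t = m (-1) t := by
  refine constant_of_has_deriv_right_zero (f := fun w => m w t)
    (h.1.1.continuous.comp (Continuous.prodMk_left t)).continuousOn (fun w hw => ?_) z hz
  have hd := (h.1.1.hasDerivAt_partial_fst w t).differentiableAt.hasDerivAt
  rw [h.deriv_fst_eq_zero (Ico_subset_Icc_self hw) t] at hd
  exact hd.hasDerivWithinAt

theorem exists_eq_axialMap (h : IsWASMinimizer κ m) :
    ∃ α β : ℝ, α ^ 2 + β ^ 2 = 1 ∧ (1 - energyFloor κ) * α ^ 2 = 0 ∧
      (κ ^ 2 - energyFloor κ) * β ^ 2 = 0 ∧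
      ∀ z ∈ Icc (-1 : ℝ) 1, ∀ t, m z t = axialMap α β z t := by
  have hC := h.1.1
  have hunit := h.1.2.1
  have hslack := fun t =>
    slackDensity_eq_zero_iff.1 (h.slackDensity_eq_zero (z := -1) (by norm_num) t)
  have hd : ∀ t, HasDerivAt (fun s => m (-1) s) (deriv (fun s => m (-1) s) t) t := fun t =>
    (hC.hasDerivAt_partial_snd (-1) t).differentiableAt.hasDerivAt
  set β := m (-1) 0 2
  have hβ : ∀ t, m (-1) t 2 = β := fun t =>
    is_const_of_deriv_eq_zero (f := fun s => m (-1) s 2)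
      (fun s => (hasDerivAt_pi.1 (hd s) 2).differentiableAt)
      (fun s => (hasDerivAt_pi.1 (hd s) 2).deriv.trans (hslack s).2.1) t 0
  have hm_cont : Continuous fun t => m (-1) t := hC.continuous.comp (Continuous.prodMk_right (-1))
  obtain ⟨α, hα⟩ := exists_eq_mul_cos_sin_of_parallel (x := fun t => m (-1) t 0)
    (y := fun t => m (-1) t 1) (by fun_prop) (by fun_prop) (r := 1 - β ^ 2)
    (fun t => by
      linear_combination (sq3.eq_1 _).symm.trans (hunit (-1) t) - (m (-1) t 2 + β) * hβ t)
    (fun t => (hslack t).2.2.1)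
  have hform : ∀ t, m (-1) t = axialMap α β (-1) t := fun t => by
    funext i
    fin_cases i <;> simp [axialMap, hα t, hβ t]
  refine ⟨α, β, ?_, ?_, ?_, fun z hz t => (h.eq_of_mem_Icc hz t).trans (hform t)⟩
  · simpa [hform, sq3, axialMap] using hunit (-1) 0
  · simpa [hform, axialMap] using (hslack 0).2.2.2.1
  · simpa [hform, axialMap] using (hslack 0).2.2.2.2

end IsWASMinimizer

end

theorem axially_symmetric_energy_minimizers_general
    (κ : ℝ)
    (m : ℝ → ℝ → Fin 3 → ℝ)
    (hm : AdmissibleWAS m)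
    (hmin : ∀ m' : ℝ → ℝ → Fin 3 → ℝ, AdmissibleWAS m' →
      cylEnergy κ m ≤ cylEnergy κ m') :
    (∀ z ∈ Icc (-1 : ℝ) 1, ∀ t : ℝ, deriv (fun w => m w t) z = 0) ∧
    (κ ^ 2 < 1 →
      ((∀ z ∈ Icc (-1 : ℝ) 1, ∀ t : ℝ, m z t = ![0, 0, 1]) ∨
       (∀ z ∈ Icc (-1 : ℝ) 1, ∀ t : ℝ, m z t = ![0, 0, -1]))) ∧
    (1 < κ ^ 2 →
      ((∀ z ∈ Icc (-1 : ℝ) 1, ∀ t : ℝ, m z t = nvec t) ∨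
       (∀ z ∈ Icc (-1 : ℝ) 1, ∀ t : ℝ, m z t = -nvec t))) ∧
    (κ ^ 2 = 1 →
      ∃ θ : ℝ, ∀ z ∈ Icc (-1 : ℝ) 1, ∀ t : ℝ,
        m z t = ![Real.sin θ * Real.cos t, Real.sin θ * Real.sin t, Real.cos θ]) ∧
    (κ ^ 2 ≤ 1 → cylEnergy κ m = 4 * π * κ ^ 2) ∧
    (1 ≤ κ ^ 2 → cylEnergy κ m = 4 * π) := by
  have h : IsWASMinimizer κ m := ⟨hm, hmin⟩
  obtain ⟨α, β, hαβ, hα, hβ, hform⟩ := h.exists_eq_axialMap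
  refine ⟨fun z hz t => h.deriv_fst_eq_zero hz t, fun hlt => ?_, fun hgt => ?_, fun _ => ?_,
    fun hle => ?_, fun hge => ?_⟩
  · rw [energyFloor, min_eq_right hlt.le, mul_eq_zero, sub_eq_zero, pow_eq_zero_iff two_ne_zero]
      at hα
    obtain rfl : α = 0 := hα.resolve_left hlt.ne'
    rcases (by simpa using hαβ : β = 1 ∨ β = -1) with rfl | rfl
    · exact Or.inl fun z hz t => by simp [hform z hz t, axialMap]
    · exact Or.inr fun z hz t => by simp [hform z hz t, axialMap]
  · rw [energyFloor, min_eq_left hgt.le, mul_eq_zero, sub_eq_zero, pow_eq_zero_iff two_ne_zero]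
      at hβ
    obtain rfl : β = 0 := hβ.resolve_left hgt.ne'
    rcases (by simpa using hαβ : α = 1 ∨ α = -1) with rfl | rfl
    · exact Or.inl fun z hz t => by simp [hform z hz t, axialMap, nvec]
    · exact Or.inr fun z hz t => by simp [hform z hz t, axialMap, nvec]
  · obtain ⟨θ, hsin, hcos⟩ := exists_sin_eq_and_cos_eq hαβ
    exact ⟨θ, fun z hz t => by rw [hform z hz t, hsin, hcos, axialMap]⟩
  · rw [h.cylEnergy_eq, energyFloor, min_eq_right hle]
  · rw [h.cylEnergy_eq, energyFloor, min_eq_left hge, mul_one]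

/-- **Axially symmetric energy minimizers**: minimizers of the cylinder energy in
the class of weakly axially symmetric configurations are `z`-invariant, and are
`±e₃` for `0 < κ² < 1`, `±n` for `κ² > 1`, and of the form `u_θ` for `κ² = 1`;
the minimal energy is `4πκ²` for `0 < κ² ≤ 1` and `4π` for `κ² ≥ 1`. -/
theorem axially_symmetric_energy_minimizers
    (κ : ℝ) (hκ : 0 < κ ^ 2)
    (m : ℝ → ℝ → Fin 3 → ℝ)
    (hm : AdmissibleWAS m)
    (hmin : ∀ m' : ℝ → ℝ → Fin 3 → ℝ, AdmissibleWAS m' →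
      cylEnergy κ m ≤ cylEnergy κ m') :
    (∀ z ∈ Icc (-1 : ℝ) 1, ∀ t : ℝ, deriv (fun w => m w t) z = 0) ∧
    (κ ^ 2 < 1 →
      ((∀ z ∈ Icc (-1 : ℝ) 1, ∀ t : ℝ, m z t = ![0, 0, 1]) ∨
       (∀ z ∈ Icc (-1 : ℝ) 1, ∀ t : ℝ, m z t = ![0, 0, -1]))) ∧
    (1 < κ ^ 2 →
      ((∀ z ∈ Icc (-1 : ℝ) 1, ∀ t : ℝ, m z t = nvec t) ∨
       (∀ z ∈ Icc (-1 : ℝ) 1, ∀ t : ℝ, m z t = -nvec t))) ∧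
    (κ ^ 2 = 1 →
      ∃ θ : ℝ, ∀ z ∈ Icc (-1 : ℝ) 1, ∀ t : ℝ,
        m z t = ![Real.sin θ * Real.cos t, Real.sin θ * Real.sin t, Real.cos θ]) ∧
    (κ ^ 2 ≤ 1 → cylEnergy κ m = 4 * π * κ ^ 2) ∧
    (1 ≤ κ ^ 2 → cylEnergy κ m = 4 * π) :=
  axially_symmetric_energy_minimizers_general κ m hm hmin
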